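/- Let I be a nonempty finite set of coordinate indices of ℝⁿ, let s ∈ ℝⁿ, and let ε_i > 0 for each i ∈ I. Then b(x; I, s, ε) > 0 if and only if Σ_{i∈I} |x_i − s_i|/ε_i < 1; moreover the set {x ∈ ℝⁿ : Σ_{i∈I} |x_i − s_i|/ε_i < 1} is open and convex. (The support of a bar function is a weighted ℓ¹ ball centered at s.) -/
import Mathlib


/-- ReLU function: `relu v = max v 0`. -/
noncomputable def relu (v : ℝ) : ℝ := max v 0

/-- Basic bar function `φ(x; i, s, ε)` on `ℝⁿ`. -/
noncomputable def phi {n : ℕ} (x : Fin n → ℝ) (i : Fin n) (s ε : ℝ) : ℝ :=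
  (1 / ε) * (relu ((x i - s) + ε) - 2 * relu (x i - s) + relu ((x i - s) - ε))

/-- Bar function `b(x; I, s, ε) = ReLU(Σ_{i∈I} φ(x; i, s_i, ε_i) − #I + 1)`. -/
noncomputable def bar {n : ℕ} (x : Fin n → ℝ) (I : Finset (Fin n)) (s ε : Fin n → ℝ) : ℝ :=
  relu (∑ i ∈ I, phi x i (s i) (ε i) - (I.card : ℝ) + 1)

lemma phi_eq {n : ℕ} (x : Fin n → ℝ) (i : Fin n) (s ε : ℝ) (hε : 0 < ε) :
    phi x i s ε = max (1 - |x i - s| / ε) 0 := by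
  unfold phi relu
  set t := x i - s with ht
  rcases le_total t 0 with h | h
  · rcases le_total t (-ε) with h2 | h2
    · rw [max_eq_right (by linarith), max_eq_right h, max_eq_right (by linarith),
        abs_of_nonpos h,
        max_eq_right (by rw [sub_nonpos, le_div_iff₀ hε]; linarith)]
      ring
    · rw [max_eq_left (by linarith), max_eq_right h, max_eq_right (by linarith),
        abs_of_nonpos h,
        max_eq_left (by rw [sub_nonneg, div_le_one hε]; linarith)]
      field_simp; ring
  · rcases le_total t ε with h2 | h2
    · rw [max_eq_left (by linarith), max_eq_left h, max_eq_right (by linarith),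
        abs_of_nonneg h,
        max_eq_left (by rw [sub_nonneg, div_le_one hε]; linarith)]
      field_simp; ring
    · rw [max_eq_left (by linarith), max_eq_left h, max_eq_left (by linarith),
        abs_of_nonneg h,
        max_eq_right (by rw [sub_nonpos, le_div_iff₀ hε]; linarith)]
      ring


/-- The support of the bar function is a weighted ℓ¹ ball centered at `s`:
`b(x; I, s, ε) > 0 ↔ Σ_{i∈I} |x_i - s_i| / ε_i < 1`, and this set is open and convex. -/
theorem bar_support_weighted_l1_ball {n : ℕ} (I : Finset (Fin n)) (hI : I.Nonempty)
    (s ε : Fin n → ℝ) (hε : ∀ i ∈ I, 0 < ε i) :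
    (∀ x : Fin n → ℝ, 0 < bar x I s ε ↔ ∑ i ∈ I, |x i - s i| / ε i < 1) ∧
    IsOpen {x : Fin n → ℝ | ∑ i ∈ I, |x i - s i| / ε i < 1} ∧
    Convex ℝ {x : Fin n → ℝ | ∑ i ∈ I, |x i - s i| / ε i < 1} := by
  refine ⟨fun x => ?_, ?_, ?_⟩
  · have key : ∀ i ∈ I, phi x i (s i) (ε i) = max (1 - |x i - s i| / ε i) 0 :=
      fun i hi => phi_eq x i (s i) (ε i) (hε i hi)
    have hnn : ∀ i ∈ I, 0 ≤ |x i - s i| / ε i :=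
      fun i hi => div_nonneg (abs_nonneg _) (hε i hi).le
    unfold bar relu
    rw [lt_max_iff]
    simp only [lt_self_iff_false, or_false]
    rw [Finset.sum_congr rfl key]
    constructor
    · intro h
      have hle1 : ∀ i ∈ I, max (1 - |x i - s i| / ε i) 0 ≤ 1 := by
        intro i hi
        exact max_le (by linarith [hnn i hi]) zero_le_one
      have hpos : ∀ j ∈ I, 0 < max (1 - |x j - s j| / ε j) 0 := by
        intro j hj
        by_contra hcon
        push_neg at hcon
        have hsum : ∑ i ∈ I, max (1 - |x i - s i| / ε i) 0 ≤ (I.card : ℝ) - 1 := by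
          rw [← Finset.sum_erase_add I _ hj]
          have h1 : ∑ i ∈ I.erase j, max (1 - |x i - s i| / ε i) 0
              ≤ ((I.erase j).card : ℝ) := by
            calc ∑ i ∈ I.erase j, max (1 - |x i - s i| / ε i) 0
                ≤ ∑ _i ∈ I.erase j, (1:ℝ) :=
                  Finset.sum_le_sum fun i hi => hle1 i (Finset.mem_of_mem_erase hi)
              _ = ((I.erase j).card : ℝ) := by simp
          have hcard : ((I.erase j).card : ℝ) = (I.card : ℝ) - 1 := by
            rw [Finset.card_erase_of_mem hj,
              Nat.cast_sub (Finset.card_pos.mpr ⟨j, hj⟩), Nat.cast_one]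
          linarith
        linarith
      have heq : ∀ i ∈ I, max (1 - |x i - s i| / ε i) 0 = 1 - |x i - s i| / ε i := by
        intro i hi
        have hp := hpos i hi
        rcases max_cases (1 - |x i - s i| / ε i) (0:ℝ) with ⟨h1, _⟩ | ⟨h1, _⟩
        · exact h1
        · rw [h1] at hp; exact absurd hp (lt_irrefl 0)
      rw [Finset.sum_congr rfl heq, Finset.sum_sub_distrib, Finset.sum_const,
        nsmul_eq_mul, mul_one] at h
      linarith
    · intro h
      have heach : ∀ i ∈ I, |x i - s i| / ε i < 1 := by
        intro i hi
        calc |x i - s i| / ε i ≤ ∑ j ∈ I, |x j - s j| / ε j :=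
              Finset.single_le_sum hnn hi
          _ < 1 := h
      have heq : ∀ i ∈ I, max (1 - |x i - s i| / ε i) 0 = 1 - |x i - s i| / ε i := by
        intro i hi
        exact max_eq_left (by linarith [heach i hi])
      rw [Finset.sum_congr rfl heq, Finset.sum_sub_distrib, Finset.sum_const,
        nsmul_eq_mul, mul_one]
      linarith
  · have hc : Continuous fun x : Fin n → ℝ => ∑ i ∈ I, |x i - s i| / ε i := by
      apply continuous_finset_sum
      intro i _
      exact (((continuous_apply i).sub continuous_const).abs).div_const _
    exact isOpen_lt hc continuous_const
  · intro x hx y hy a b ha hb hab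
    simp only [Set.mem_setOf_eq] at *
    have key : ∀ i ∈ I, |(a • x + b • y) i - s i| / ε i
        ≤ a * (|x i - s i| / ε i) + b * (|y i - s i| / ε i) := by
      intro i hi
      have hεi := hε i hi
      have h1 : |(a • x + b • y) i - s i| ≤ a * |x i - s i| + b * |y i - s i| := by
        have hrw : (a • x + b • y) i - s i = a * (x i - s i) + b * (y i - s i) := by
          simp only [Pi.add_apply, Pi.smul_apply, smul_eq_mul]
          linear_combination (s i) * hab
        rw [hrw]
        calc |a * (x i - s i) + b * (y i - s i)|
            ≤ |a * (x i - s i)| + |b * (y i - s i)| := abs_add_le _ _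
          _ = a * |x i - s i| + b * |y i - s i| := by
              rw [abs_mul, abs_mul, abs_of_nonneg ha, abs_of_nonneg hb]
      rw [div_le_iff₀ hεi]
      have hrw2 : (a * (|x i - s i| / ε i) + b * (|y i - s i| / ε i)) * ε i
          = a * |x i - s i| + b * |y i - s i| := by
        field_simp
      rw [hrw2]
      exact h1
    have hmain : ∑ i ∈ I, |(a • x + b • y) i - s i| / ε i
        ≤ a * ∑ i ∈ I, |x i - s i| / ε i + b * ∑ i ∈ I, |y i - s i| / ε i := by
      calc ∑ i ∈ I, |(a • x + b • y) i - s i| / ε i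
          ≤ ∑ i ∈ I, (a * (|x i - s i| / ε i) + b * (|y i - s i| / ε i)) :=
            Finset.sum_le_sum key
        _ = _ := by rw [Finset.sum_add_distrib, Finset.mul_sum, Finset.mul_sum]
    rcases ha.eq_or_lt with rfl | ha'
    · have hb1 : b = 1 := by linarith
      calc _ ≤ _ := hmain
        _ < 1 := by rw [hb1] at *; simp; linarith
    · have h1 : a * ∑ i ∈ I, |x i - s i| / ε i < a * 1 := by
        exact mul_lt_mul_of_pos_left hx ha'
      have h2 : b * ∑ i ∈ I, |y i - s i| / ε i ≤ b * 1 :=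
        mul_le_mul_of_nonneg_left hy.le hb
      calc _ ≤ _ := hmain
        _ < 1 := by linarith
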